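/- arXiv:2310.18043 — 7 statements merged into one kernel-verified Lean document; each statement's English description precedes it below -/
import Mathlib

section
/- Let k be a positive integer, c ∈ ℂ, r > 0, and let σ_1, …, σ_k ∈ ℂ be the k roots of z^k = -1, so that p_i = c + r·σ_i are the k trapezoidal-quadrature poles on the circle of center c and radius r. Then for every z ∈ ℂ with z ≠ p_i for all i, (1/k) · Σ_{i=1}^k (p_i − c)/(p_i − z) = 1/(1 + ((z − c)/r)^k). -/
/-!
The poles are `σ i = (p i - c) / r`, so in the variable `w = (z - c) / r` the claim reads
`∑ σ i / (σ i - w) = k / (1 + w ^ k)`. Since the `σ i` are `k` distinct roots of `X ^ k + 1`, they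
are all of its roots, and the logarithmic derivative of `X ^ k + 1` gives
`∑ 1 / (w - σ i) = k w ^ (k - 1) / (w ^ k + 1)`. Writing `σ / (σ - w) = 1 - w / (w - σ)` finishes.
-/

open Polynomial

section RootsOfXPowAddOne

variable {K : Type*} [Field K] {k : ℕ} {σ : Fin k → K}

theorem roots_X_pow_add_one_eq_of_injective (hk : 0 < k) (hinj : Function.Injective σ)
    (hroot : ∀ i, σ i ^ k = -1) :
    (X ^ k + 1 : K[X]).roots = (Finset.univ.map ⟨σ, hinj⟩).val := by
  refine roots_eq_of_natDegree_le_card_of_ne_zero ?_ ?_ (monic_X_pow_add_C 1 hk.ne').ne_zero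
  · simp [hroot]
  · rw [← C_1, natDegree_X_pow_add_C]
    simp

theorem exists_eq_of_pow_eq_neg_one (hk : 0 < k) (hinj : Function.Injective σ)
    (hroot : ∀ i, σ i ^ k = -1) {w : K} (hw : w ^ k = -1) : ∃ i, σ i = w := by
  have hmem : w ∈ (X ^ k + 1 : K[X]).roots :=
    (mem_roots (monic_X_pow_add_C 1 hk.ne').ne_zero).2 (by simp [hw])
  simpa [roots_X_pow_add_one_eq_of_injective hk hinj hroot] using hmem

theorem pow_add_one_mul_sum_one_div_sub (hk : 0 < k) (hinj : Function.Injective σ)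
    (hroot : ∀ i, σ i ^ k = -1) {w : K} (hw : w ^ k + 1 ≠ 0) :
    (w ^ k + 1) * ∑ i, 1 / (w - σ i) = k * w ^ (k - 1) := by
  have hroots := roots_X_pow_add_one_eq_of_injective hk hinj hroot
  have hsplits : (X ^ k + 1 : K[X]).Splits := by
    rw [splits_iff_card_roots, hroots, ← C_1, natDegree_X_pow_add_C]
    simp
  have hlog := hsplits.eval_derivative_eq_eval_mul_sum (x := w) (by simpa using hw)
  rw [hroots, Finset.sum_map_val, Finset.sum_map] at hlog
  simpa [derivative_X_pow] using hlog.symm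

theorem sum_div_sub_eq_div_one_add_pow (hk : 0 < k) (hinj : Function.Injective σ)
    (hroot : ∀ i, σ i ^ k = -1) {w : K} (hw : ∀ i, σ i ≠ w) :
    ∑ i, σ i / (σ i - w) = k / (1 + w ^ k) := by
  have hden : w ^ k + 1 ≠ 0 := fun h => by
    obtain ⟨i, hi⟩ := exists_eq_of_pow_eq_neg_one hk hinj hroot (eq_neg_of_add_eq_zero_left h)
    exact hw i hi
  have hterm : ∀ i, σ i / (σ i - w) = 1 - w * (1 / (w - σ i)) := fun i => by
    have : σ i - w ≠ 0 := sub_ne_zero.2 (hw i)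
    have : w - σ i ≠ 0 := sub_ne_zero.2 (hw i).symm
    field_simp
    ring
  calc ∑ i, σ i / (σ i - w) = k - w * ∑ i, 1 / (w - σ i) := by
        simp [hterm, Finset.sum_sub_distrib, Finset.mul_sum]
    _ = k - w * (k * w ^ (k - 1) / (w ^ k + 1)) := by
        rw [← pow_add_one_mul_sum_one_div_sub hk hinj hroot hden, mul_div_cancel_left₀ _ hden]
    _ = k / (1 + w ^ k) := by
        have hpow : w * w ^ (k - 1) = w ^ k := mul_pow_sub_one hk.ne' w
        rw [add_comm 1]
        field_simp
        linear_combination -(k : K) * hpow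

end RootsOfXPowAddOne

/-- For center `c`, radius `r > 0`, and the `k` roots `σ i` of `z^k = -1`,
the trapezoidal-quadrature poles are `p i = c + r σ i`, and for every `z` distinct from
all poles, `(1/k) ⬝ Σ (p i − c)/(p i − z) = 1 / (1 + ((z − c)/r)^k)`. -/
theorem trapezoidal_compact_form_general (k : ℕ) (hk : 0 < k) (c : ℂ) (r : ℝ) (hr : 0 < r)
    (σ : Fin k → ℂ) (hinj : Function.Injective σ) (hroot : ∀ i, σ i ^ k = -1)
    (p : Fin k → ℂ) (hp : ∀ i, p i = c + (r : ℂ) * σ i)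
    (z : ℂ) (hz : ∀ i, z ≠ p i) :
    (1 / (k : ℂ)) * ∑ i, (p i - c) / (p i - z) = 1 / (1 + ((z - c) / (r : ℂ)) ^ k) := by
  set w := (z - c) / (r : ℂ)
  have hr0 : (r : ℂ) ≠ 0 := by exact_mod_cast hr.ne'
  have hk0 : (k : ℂ) ≠ 0 := by exact_mod_cast hk.ne'
  have hz_eq : z = c + r * w := by
    simp only [w]
    field_simp
    ring
  have hterm : ∀ i, (p i - c) / (p i - z) = σ i / (σ i - w) := fun i => by
    rw [hp i, hz_eq, add_sub_cancel_left, add_sub_add_left_eq_sub, ← mul_sub,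
      mul_div_mul_left _ _ hr0]
  have hσw : ∀ i, σ i ≠ w := fun i h => hz i (by rw [hp i, h, hz_eq])
  rw [Finset.sum_congr rfl fun i _ => hterm i, sum_div_sub_eq_div_one_add_pow hk hinj hroot hσw,
    one_div_mul_eq_div, div_div_cancel_left' hk0, one_div]
end

section
/- Let 0 < ℓ < 1 and let S = {z ∈ ℂ : |z − (1+ℓ)/2| ≤ (1−ℓ)/2}, and −S = {−z : z ∈ S}. Let k be a positive integer and define r(z) = ((z − √ℓ)/(z + √ℓ))^k. Then sup_{z ∈ S} |r(z)| = ((1−√ℓ)/(1+√ℓ))^k, inf_{z ∈ −S} |r(z)| = ((1+√ℓ)/(1−√ℓ))^k, and hence the separation ratio of r between S and −S equals ((1+√ℓ)/(1−√ℓ))^{−2k}. -/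
/-!
Write `ℓ = a²` with `0 < a < 1`. The centre `c = (1 + a²)/2` and radius `ρ = (1 - a²)/2` of `S`
satisfy `c² - a² = ρ²`, so `±a` are inverse points for the circle `∂S`, which is therefore the
Apollonius circle `|z - a| / |z + a| = (1 - a)/(1 + a)`. Concretely,
`(1 + a)²|z - a|² - (1 - a)²|z + a|² = 4a(|z - c|² - ρ²)`, so the bound holds on all of `S`, with
equality at `z = 1`. On `-S` the substitution `z ↦ -z` swaps `z - a` and `z + a`, which inverts
the bound, with equality at `z = -1`.
-/

open scoped ENNReal

def zolotarevDisk (a : ℝ) : Set ℂ :=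
  {z | ‖z - ((1 + a ^ 2) / 2 : ℝ)‖ ≤ (1 - a ^ 2) / 2}

/-- `|r(z)|` for the Zolotarev function, valued in `[0, ∞]` so that the pole `z = -a` gives `∞`. -/
noncomputable def zolotarevRatio (k : ℕ) (a : ℝ) (z : ℂ) : ℝ≥0∞ :=
  ‖(z - a) ^ k‖₊ / ‖(z + a) ^ k‖₊

section NormRatio

variable {𝕜 : Type*} [NormedDivisionRing 𝕜] {u v : 𝕜} {t : ℝ}

theorem nnnorm_pow_div_nnnorm_pow_le (h : ‖u‖ ≤ t * ‖v‖) (k : ℕ) :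
    (‖u ^ k‖₊ : ℝ≥0∞) / ‖v ^ k‖₊ ≤ ENNReal.ofReal (t ^ k) := by
  rcases eq_or_ne v 0 with rfl | hv
  · obtain rfl : u = 0 := norm_le_zero_iff.1 (by simpa using h)
    rcases k.eq_zero_or_pos with rfl | hk <;> simp [*, ne_of_gt]
  have ht : 0 ≤ t := nonneg_of_mul_nonneg_left ((norm_nonneg u).trans h) (norm_pos_iff.2 hv)
  rw [ENNReal.div_le_iff (by simp [hv]) (by simp), ← enorm_eq_nnnorm, ← enorm_eq_nnnorm,
    ← ofReal_norm, ← ofReal_norm, ← ENNReal.ofReal_mul (pow_nonneg ht k), norm_pow, norm_pow,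
    ← mul_pow]
  exact ENNReal.ofReal_le_ofReal (pow_le_pow_left₀ (norm_nonneg _) h k)

/-- `huv` excludes `0 / 0`, which is `0` in `ℝ≥0∞`. -/
theorem le_nnnorm_pow_div_nnnorm_pow (ht : 0 ≤ t) (huv : u ≠ 0 ∨ v ≠ 0) (h : t * ‖v‖ ≤ ‖u‖)
    (k : ℕ) : ENNReal.ofReal (t ^ k) ≤ (‖u ^ k‖₊ : ℝ≥0∞) / ‖v ^ k‖₊ := by
  rw [ENNReal.le_div_iff_mul_le (huv.symm.imp (by simp [·]) (by simp [·])) (Or.inl (by simp)),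
    ← enorm_eq_nnnorm, ← enorm_eq_nnnorm, ← ofReal_norm, ← ofReal_norm,
    ← ENNReal.ofReal_mul (pow_nonneg ht k), norm_pow, norm_pow, ← mul_pow]
  exact ENNReal.ofReal_le_ofReal (pow_le_pow_left₀ (by positivity) h k)

end NormRatio

theorem ENNReal.ofReal_inv_pow_div_ofReal_pow {x : ℝ} (hx : 0 < x) (k : ℕ) :
    ENNReal.ofReal (x⁻¹ ^ k) / ENNReal.ofReal (x ^ k) = ENNReal.ofReal (x ^ (-(2 * (k : ℤ)))) := by
  rw [← ENNReal.ofReal_div_of_pos (by positivity), inv_pow, div_eq_mul_inv, ← mul_inv, ← pow_add,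
    ← two_mul, zpow_neg]
  norm_cast

theorem Complex.sub_ne_zero_or_add_ne_zero (z : ℂ) {w : ℂ} (hw : w ≠ 0) :
    z - w ≠ 0 ∨ z + w ≠ 0 := by
  rw [← not_and_or]
  rintro ⟨h₁, h₂⟩
  exact hw (by linear_combination (h₂ - h₁) / 2)

theorem apollonius_circle_identity (a : ℝ) (z : ℂ) :
    (1 + a) ^ 2 * ‖z - a‖ ^ 2 - (1 - a) ^ 2 * ‖z + a‖ ^ 2 =
      4 * a * (‖z - ((1 + a ^ 2) / 2 : ℝ)‖ ^ 2 - ((1 - a ^ 2) / 2) ^ 2) := by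
  simp only [Complex.sq_norm, Complex.normSq_apply, Complex.sub_re, Complex.sub_im,
    Complex.add_re, Complex.add_im, Complex.ofReal_re, Complex.ofReal_im]
  ring

theorem norm_one_sub_ofReal {a : ℝ} (ha : a ≤ 1) : ‖(1 : ℂ) - a‖ = 1 - a := by
  exact_mod_cast Complex.norm_of_nonneg (sub_nonneg.2 ha)

theorem norm_one_add_ofReal {a : ℝ} (ha : -1 ≤ a) : ‖(1 : ℂ) + a‖ = 1 + a := by
  exact_mod_cast Complex.norm_of_nonneg (neg_le_iff_add_nonneg'.1 ha)

namespace zolotarevDisk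

variable {a : ℝ} {z : ℂ}

theorem one_mem (ha0 : 0 ≤ a) (ha1 : a ≤ 1) : (1 : ℂ) ∈ zolotarevDisk a := by
  have : (1 : ℂ) - ((1 + a ^ 2) / 2 : ℝ) = ((1 - a ^ 2) / 2 : ℝ) := by push_cast; ring
  rw [zolotarevDisk, Set.mem_ofPred_eq, this, Complex.norm_of_nonneg (by nlinarith)]

theorem norm_sub_le_mul_norm_add (ha : 0 ≤ a) (hz : z ∈ zolotarevDisk a) :
    ‖z - a‖ ≤ (1 - a) / (1 + a) * ‖z + a‖ := by
  have ha1 : a ≤ 1 := by nlinarith [norm_nonneg (z - ((1 + a ^ 2) / 2 : ℝ)), hz.out]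
  have hsq : ((1 + a) * ‖z - a‖) ^ 2 ≤ ((1 - a) * ‖z + a‖) ^ 2 := by
    nlinarith [apollonius_circle_identity a z, pow_le_pow_left₀ (norm_nonneg _) hz.out 2]
  rw [div_mul_eq_mul_div, le_div_iff₀ (by linarith), mul_comm]
  exact (abs_le_of_sq_le_sq' hsq (by positivity)).2

theorem mul_norm_add_le_norm_sub_of_neg_mem (ha0 : 0 ≤ a) (ha1 : a < 1)
    (hz : -z ∈ zolotarevDisk a) : (1 + a) / (1 - a) * ‖z + a‖ ≤ ‖z - a‖ := by
  have h := norm_sub_le_mul_norm_add ha0 hz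
  rw [← neg_add', norm_neg, neg_add_eq_sub, norm_sub_rev, div_mul_eq_mul_div,
    le_div_iff₀ (by linarith)] at h
  rw [div_mul_eq_mul_div, div_le_iff₀ (by linarith)]
  linarith

end zolotarevDisk

namespace zolotarevRatio

variable {a : ℝ}

theorem iSup_zolotarevDisk (ha0 : 0 < a) (ha1 : a < 1) (k : ℕ) :
    ⨆ z ∈ zolotarevDisk a, zolotarevRatio k a z = ENNReal.ofReal (((1 - a) / (1 + a)) ^ k) := by
  refine le_antisymm (iSup₂_le fun z hz ↦ ?_)
    (le_iSup₂_of_le 1 (zolotarevDisk.one_mem ha0.le ha1.le) ?_)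
  · exact nnnorm_pow_div_nnnorm_pow_le (zolotarevDisk.norm_sub_le_mul_norm_add ha0.le hz) k
  · refine le_nnnorm_pow_div_nnnorm_pow (by positivity) (Or.inr (by norm_cast; positivity)) ?_ k
    rw [norm_one_sub_ofReal ha1.le, norm_one_add_ofReal (by linarith),
      div_mul_cancel₀ _ (by positivity)]

theorem iInf_neg_preimage_zolotarevDisk (ha0 : 0 < a) (ha1 : a < 1) (k : ℕ) :
    ⨅ z ∈ (fun w : ℂ => -w) ⁻¹' zolotarevDisk a, zolotarevRatio k a z =
      ENNReal.ofReal (((1 + a) / (1 - a)) ^ k) := by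
  refine le_antisymm (iInf₂_le_of_le (-1) ?_ ?_) (le_iInf₂ fun z hz ↦ ?_)
  · simpa using zolotarevDisk.one_mem ha0.le ha1.le
  · refine nnnorm_pow_div_nnnorm_pow_le ?_ k
    rw [← neg_add', norm_neg, neg_add_eq_sub, norm_sub_rev, norm_one_sub_ofReal ha1.le,
      norm_one_add_ofReal (by linarith), div_mul_cancel₀ _ (by linarith)]
  · exact le_nnnorm_pow_div_nnnorm_pow (by positivity)
      (z.sub_ne_zero_or_add_ne_zero (by exact_mod_cast ha0.ne'))
      (zolotarevDisk.mul_norm_add_le_norm_sub_of_neg_mem ha0.le ha1 hz) k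

end zolotarevRatio

theorem zolotarev_function_separation_general (ℓ : ℝ) (hℓ0 : 0 < ℓ) (hℓ1 : ℓ < 1) (k : ℕ)
    (S : Set ℂ)
    (hS : S = {z : ℂ | ‖z - (((1 + ℓ) / 2 : ℝ) : ℂ)‖ ≤ (1 - ℓ) / 2})
    (f : ℂ → ENNReal)
    (hf : f = fun z =>
      (‖(z - ((Real.sqrt ℓ : ℝ) : ℂ)) ^ k‖₊ : ENNReal) /
        (‖(z + ((Real.sqrt ℓ : ℝ) : ℂ)) ^ k‖₊ : ENNReal)) :
    (⨆ z ∈ S, f z) = ENNReal.ofReal (((1 - Real.sqrt ℓ) / (1 + Real.sqrt ℓ)) ^ k) ∧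
    (⨅ z ∈ (fun w : ℂ => -w) ⁻¹' S, f z) =
      ENNReal.ofReal (((1 + Real.sqrt ℓ) / (1 - Real.sqrt ℓ)) ^ k) ∧
    (⨆ z ∈ S, f z) / (⨅ z ∈ (fun w : ℂ => -w) ⁻¹' S, f z) =
      ENNReal.ofReal (((1 + Real.sqrt ℓ) / (1 - Real.sqrt ℓ)) ^ (-(2 * (k : ℤ)))) := by
  obtain ⟨a, ha0, rfl⟩ : ∃ a, 0 < a ∧ a ^ 2 = ℓ := ⟨√ℓ, Real.sqrt_pos.2 hℓ0, Real.sq_sqrt hℓ0.le⟩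
  have ha1 : a < 1 := by nlinarith
  rw [Real.sqrt_sq ha0.le] at hf ⊢
  obtain rfl : S = zolotarevDisk a := hS
  obtain rfl : f = zolotarevRatio k a := hf
  have hsup := zolotarevRatio.iSup_zolotarevDisk ha0 ha1 k
  have hinf := zolotarevRatio.iInf_neg_preimage_zolotarevDisk ha0 ha1 k
  refine ⟨hsup, hinf, ?_⟩
  rw [hsup, hinf, ← inv_div,
    ENNReal.ofReal_inv_pow_div_ofReal_pow (div_pos (by linarith) (by linarith))]

/-- For `0 < ℓ < 1`, `S` the closed disk `{z : |z − (1+ℓ)/2| ≤ (1−ℓ)/2}`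
and `−S` its reflection through the origin, the Zolotarev function
`r(z) = ((z − √ℓ)/(z + √ℓ))^k` (with `|r(z)|` interpreted in `[0,∞]` as
`‖(z−√ℓ)^k‖ / ‖(z+√ℓ)^k‖` so poles give `∞`) satisfies
`sup_{z∈S} |r(z)| = ((1−√ℓ)/(1+√ℓ))^k`, `inf_{z∈−S} |r(z)| = ((1+√ℓ)/(1−√ℓ))^k`,
hence the separation ratio equals `((1+√ℓ)/(1−√ℓ))^{−2k}`. -/
theorem zolotarev_function_separation (ℓ : ℝ) (hℓ0 : 0 < ℓ) (hℓ1 : ℓ < 1) (k : ℕ) (hk : 0 < k)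
    (S : Set ℂ)
    (hS : S = {z : ℂ | ‖z - (((1 + ℓ) / 2 : ℝ) : ℂ)‖ ≤ (1 - ℓ) / 2})
    (f : ℂ → ENNReal)
    (hf : f = fun z =>
      (‖(z - ((Real.sqrt ℓ : ℝ) : ℂ)) ^ k‖₊ : ENNReal) /
        (‖(z + ((Real.sqrt ℓ : ℝ) : ℂ)) ^ k‖₊ : ENNReal)) :
    (⨆ z ∈ S, f z) = ENNReal.ofReal (((1 - Real.sqrt ℓ) / (1 + Real.sqrt ℓ)) ^ k) ∧
    (⨅ z ∈ (fun w : ℂ => -w) ⁻¹' S, f z) =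
      ENNReal.ofReal (((1 + Real.sqrt ℓ) / (1 - Real.sqrt ℓ)) ^ k) ∧
    (⨆ z ∈ S, f z) / (⨅ z ∈ (fun w : ℂ => -w) ⁻¹' S, f z) =
      ENNReal.ofReal (((1 + Real.sqrt ℓ) / (1 - Real.sqrt ℓ)) ^ (-(2 * (k : ℤ)))) :=
  zolotarev_function_separation_general ℓ hℓ0 hℓ1 k S hS f hf
end

section
/- Let 0 < ℓ < 1, S = {z ∈ ℂ : |z − (1+ℓ)/2| ≤ (1−ℓ)/2}, −S = {−z : z ∈ S}, and let k be a positive integer. Then for every rational function r = P/Q with P, Q complex polynomials of degree at most k, P ≠ 0 and Q ≠ 0, the separation ratio satisfies sup_{z ∈ S} |r(z)| / inf_{z ∈ −S} |r(z)| ≥ ((1+√ℓ)/(1−√ℓ))^{−2k}, where the ratio is interpreted in the extended nonnegative reals [0, ∞]. -/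
/-!
With `s = √ℓ` and `ρ = (1 - s) / (1 + s)`, the Cayley map `w ↦ s (1 + w) / (1 - w)` sends the
circle `|w| = ρ` into `S`, and since it conjugates `w ↦ w⁻¹` to `z ↦ -z`, the circle `|w| = ρ⁻¹`
into `-S`. Clearing the denominator `(1 - w)ᵏ` turns `P` and `Q` into polynomials `p`, `q` of
degree at most `k`, so it suffices to compare `|p / q|` on two concentric circles `r < R`.
By Jensen's formula the circle average of `log |p|` over `|w| = t` is
`log |lc p| + ∑ log (max t |a|)`, the sum running over the roots `a` of `p`; it is nondecreasing
in `t` and grows by at most `deg p · log (R / r)` from `r` to `R`. Averaging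
`log |p| ≤ log a + log |q|` over the inner circle and `log b + log |q| ≤ log |p|` over the outer
one gives `log b ≤ log a + k log (R / r)`, i.e. `(r / R)ᵏ ≤ a / b`.
-/

open Polynomial Real Metric Filter MeasureTheory Finset
open scoped ENNReal NNReal

theorem circleAverage_mono_of_codiscreteWithin {c : ℂ} {R : ℝ} {f₁ f₂ : ℂ → ℝ}
    (hf₁ : CircleIntegrable f₁ c R) (hf₂ : CircleIntegrable f₂ c R)
    (h : f₁ ≤ᶠ[codiscreteWithin (sphere c |R|)] f₂) (hR : R ≠ 0) :
    circleAverage f₁ c R ≤ circleAverage f₂ c R := by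
  rw [circleAverage_def, circleAverage_def, smul_eq_mul, smul_eq_mul]
  gcongr
  apply intervalIntegral.integral_mono_ae_restrict two_pi_pos.le hf₁ hf₂
  apply ae_restrict_le_codiscreteWithin measurableSet_Icc
  exact codiscreteWithin_mono (Set.subset_univ _) (circleMap_preimage_codiscrete hR h)

theorem log_max_le_log_max_add_log_div {r R x : ℝ} (hr : 0 < r) (hrR : r ≤ R) (hx : 0 ≤ x) :
    log (max R x) ≤ log (max r x) + log (R / r) := by
  have hR : 0 < R := hr.trans_le hrR
  rw [← log_mul (by positivity) (by positivity)]
  gcongr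
  rw [max_mul_of_nonneg _ _ (by positivity), mul_div_cancel₀ _ hr.ne']
  exact max_le_max le_rfl (le_mul_of_one_le_right hx ((one_le_div hr).2 hrR))

theorem log_add_posLog_inv_mul {R x : ℝ} (hR : 0 < R) (hx : 0 ≤ x) :
    log R + log⁺ (R⁻¹ * x) = log (max R x) := by
  rw [posLog_eq_log_max_one (by positivity), ← log_mul hR.ne' (by positivity),
    mul_max_of_nonneg _ _ hR.le, mul_one, mul_inv_cancel_left₀ hR.ne']

namespace Polynomial

theorem setOf_eval_ne_zero_mem_codiscreteWithin {p : ℂ[X]} (hp : p ≠ 0) (U : Set ℂ) :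
    {w | p.eval w ≠ 0} ∈ codiscreteWithin U := by
  simpa [Set.compl_ofPred] using compl_finite_mem_codiscreteWithin (p.finite_setOfPred_isRoot hp)

theorem exists_mem_sphere_eval_ne_zero {p : ℂ[X]} (hp : p ≠ 0) {r : ℝ} (hr : 0 < r) :
    ∃ w ∈ sphere (0 : ℂ) r, p.eval w ≠ 0 := by
  have hinf : (sphere (0 : ℂ) r).Infinite := by
    refine (isConnected_sphere (by simp) 0 hr.le).isPreconnected.infinite_of_nontrivial
      ⟨r, by simp [hr.le], -r, by simp [hr.le], fun h ↦ by
        have := congrArg Complex.re h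
        simp at this
        linarith⟩
  obtain ⟨w, hw, hpw⟩ := (hinf.sdiff (p.finite_setOfPred_isRoot hp)).nonempty
  exact ⟨w, hw, hpw⟩

theorem circleIntegrable_log_norm_eval (p : ℂ[X]) (c : ℂ) (R : ℝ) :
    CircleIntegrable (fun w ↦ log ‖p.eval w‖) c R :=
  MeromorphicOn.circleIntegrable_log_norm fun w _ ↦ p.differentiable.analyticAt w |>.meromorphicAt

theorem circleAverage_log_norm_eval (p : ℂ[X]) {R : ℝ} (hR : 0 < R) :
    circleAverage (fun w ↦ log ‖p.eval w‖) 0 R =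
      log ‖p.leadingCoeff‖ + (p.roots.map fun a ↦ log (max R ‖a‖)).sum := by
  rcases eq_or_ne p 0 with rfl | hp
  · simp [circleAverage_const]
  have hRu : IsUnit (R : ℂ) := by simpa using hR.ne'
  have hcomp : circleAverage (fun w ↦ log ‖p.eval w‖) 0 R =
      (p.comp (C (R : ℂ) * X + C 0)).logMahlerMeasure := by
    rw [circleAverage_eq_circleAverage_zero_one, logMahlerMeasure_def]
    simp
  have hlc : (p.comp (C (R : ℂ) * X + C 0)).leadingCoeff = p.leadingCoeff * R ^ p.roots.card := by
    rw [leadingCoeff_comp (by simp [hR.ne']), IsAlgClosed.card_roots_eq_natDegree]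
    simp
  have hcard : p.roots.card * log R = (p.roots.map fun _ ↦ log R).sum := by
    simp [Multiset.map_const', Multiset.sum_replicate]
  rw [hcomp, logMahlerMeasure_eq_log_leadingCoeff_add_sum_log_roots,
    roots_comp_C_mul_X_add_C _ _ _ hRu, hlc, norm_mul,
    log_mul (by simpa using hp) (by simp [hR.ne']), add_assoc, Multiset.map_map, norm_pow,
    Complex.norm_real, norm_of_nonneg hR.le, log_pow, hcard, ← Multiset.sum_map_add]
  congr 2
  refine Multiset.map_congr rfl fun a _ ↦ ?_
  simp [Ring.inverse_eq_inv', log_add_posLog_inv_mul hR (norm_nonneg a), abs_of_pos hR]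

variable (p : ℂ[X]) {r R : ℝ}

theorem circleAverage_log_norm_eval_mono (hr : 0 < r) (hrR : r ≤ R) :
    circleAverage (fun w ↦ log ‖p.eval w‖) 0 r ≤ circleAverage (fun w ↦ log ‖p.eval w‖) 0 R := by
  rw [circleAverage_log_norm_eval p hr, circleAverage_log_norm_eval p (hr.trans_le hrR)]
  gcongr with a
  exact Multiset.sum_map_le_sum_map _ _ fun a _ ↦ by gcongr

theorem circleAverage_log_norm_eval_le (hr : 0 < r) (hrR : r ≤ R) :
    circleAverage (fun w ↦ log ‖p.eval w‖) 0 R ≤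
      circleAverage (fun w ↦ log ‖p.eval w‖) 0 r + p.natDegree * log (R / r) := by
  rw [circleAverage_log_norm_eval p hr, circleAverage_log_norm_eval p (hr.trans_le hrR),
    add_assoc, ← IsAlgClosed.card_roots_eq_natDegree]
  have hcard : p.roots.card * log (R / r) = (p.roots.map fun _ ↦ log (R / r)).sum := by
    simp [Multiset.map_const', Multiset.sum_replicate]
  rw [hcard, ← Multiset.sum_map_add]
  gcongr
  exact Multiset.sum_map_le_sum_map _ _ fun a _ ↦
    log_max_le_log_max_add_log_div hr hrR (norm_nonneg a)

variable {p} in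
theorem circleAverage_log_norm_eval_le_of_norm_le {q : ℂ[X]} (hp : p ≠ 0) {c : ℝ} (hc : 0 < c)
    (hR : R ≠ 0) (h : ∀ w ∈ sphere (0 : ℂ) |R|, ‖p.eval w‖ ≤ c * ‖q.eval w‖) :
    circleAverage (fun w ↦ log ‖p.eval w‖) 0 R ≤
      log c + circleAverage (fun w ↦ log ‖q.eval w‖) 0 R := by
  rw [← circleAverage_const (log c) 0 R, ← circleAverage_fun_add (circleIntegrable_const _ _ _)
    (circleIntegrable_log_norm_eval q 0 R)]
  refine circleAverage_mono_of_codiscreteWithin (circleIntegrable_log_norm_eval p 0 R)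
    ((circleIntegrable_const _ _ _).add (circleIntegrable_log_norm_eval q 0 R)) ?_ hR
  -- off the zeros of `p` both sides are genuine logarithms (`log 0 = 0` would break this)
  filter_upwards [setOf_eval_ne_zero_mem_codiscreteWithin hp _,
    self_mem_codiscreteWithin _] with w hpw hw
  have hqw : 0 < ‖q.eval w‖ := pos_of_mul_pos_right ((norm_pos_iff.2 hpw).trans_le (h w hw)) hc.le
  rw [← log_mul hc.ne' hqw.ne']
  exact log_le_log (norm_pos_iff.2 hpw) (h w hw)

variable {p} in
theorem pow_div_le_div_of_norm_eval_le {q : ℂ[X]} (hp : p ≠ 0) (hq : q ≠ 0) {k : ℕ}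
    (hpk : p.natDegree ≤ k) (hr : 0 < r) (hrR : r ≤ R) {a b : ℝ} (ha : 0 < a) (hb : 0 < b)
    (hin : ∀ w ∈ sphere (0 : ℂ) r, ‖p.eval w‖ ≤ a * ‖q.eval w‖)
    (hout : ∀ w ∈ sphere (0 : ℂ) R, b * ‖q.eval w‖ ≤ ‖p.eval w‖) :
    (r / R) ^ k ≤ a / b := by
  have hR : 0 < R := hr.trans_le hrR
  set Lp := fun ρ ↦ circleAverage (fun w ↦ log ‖p.eval w‖) 0 ρ
  set Lq := fun ρ ↦ circleAverage (fun w ↦ log ‖q.eval w‖) 0 ρ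
  have hlogRr : 0 ≤ log (R / r) := log_nonneg ((one_le_div hr).2 hrR)
  have hkey : log b ≤ log a + k * log (R / r) := by
    have hinner : Lp r ≤ log a + Lq r := circleAverage_log_norm_eval_le_of_norm_le hp ha hr.ne'
      (by simpa [abs_of_pos hr] using hin)
    have houter : Lq R ≤ log b⁻¹ + Lp R :=
      circleAverage_log_norm_eval_le_of_norm_le hq (inv_pos.2 hb) hR.ne' fun w hw ↦ by
        rw [abs_of_pos hR] at hw
        rw [inv_mul_eq_div, le_div_iff₀ hb, mul_comm]
        exact hout w hw
    have hgrowth : Lp R ≤ Lp r + p.natDegree * log (R / r) :=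
      circleAverage_log_norm_eval_le p hr hrR
    have hmono : Lq r ≤ Lq R := circleAverage_log_norm_eval_mono q hr hrR
    have hdeg : (p.natDegree : ℝ) * log (R / r) ≤ k * log (R / r) := by gcongr
    rw [log_inv] at houter
    linarith
  rw [← log_pow, ← log_mul ha.ne' (by positivity)] at hkey
  rw [le_div_iff₀ hb]
  calc (r / R) ^ k * b ≤ (r / R) ^ k * (a * (R / r) ^ k) := by
        gcongr
        exact (log_le_log_iff hb (by positivity)).1 hkey
    _ = a := by
        rw [mul_left_comm, ← mul_pow, div_mul_div_cancel₀ hR.ne', div_self hr.ne', one_pow, mul_one]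

end Polynomial

theorem ne_one_of_mem_sphere_zero {ρ : ℝ} (hρ : ρ ≠ 1) {w : ℂ} (hw : w ∈ sphere (0 : ℂ) ρ) :
    w ≠ 1 := by
  rintro rfl
  simp [eq_comm, hρ] at hw

section Cayley

variable {K : Type*} [Field K]

def cayley (s w : K) : K := s * (1 + w) / (1 - w)

theorem cayley_inv (s : K) {w : K} (hw : w ≠ 0) : cayley s w⁻¹ = -cayley s w := by
  unfold cayley
  rcases eq_or_ne w 1 with rfl | hw1
  · simp
  have : 1 - w ≠ 0 := sub_ne_zero.2 (Ne.symm hw1)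
  have : 1 - w⁻¹ ≠ 0 := by rwa [sub_ne_zero, ne_comm, inv_ne_one]
  field_simp
  ring

theorem sub_div_add_ne_one [CharZero K] {s z : K} (hs : s ≠ 0) (hz : z + s ≠ 0) :
    (z - s) / (z + s) ≠ 1 := by
  rw [Ne, div_eq_one_iff_eq hz]
  intro h
  exact hs (by linear_combination -h / 2)

theorem cayley_div [CharZero K] {s z : K} (hs : s ≠ 0) (hz : z + s ≠ 0) :
    cayley s ((z - s) / (z + s)) = z := by
  have h1 : 1 + (z - s) / (z + s) = 2 * z / (z + s) := by field_simp; ring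
  have h2 : 1 - (z - s) / (z + s) = 2 * s / (z + s) := by field_simp; ring
  rw [cayley, h1, h2]
  field_simp

namespace Polynomial

noncomputable def cayleyTransform (s : K) (k : ℕ) (p : K[X]) : K[X] :=
  ∑ j ∈ range (k + 1), C (p.coeff j * s ^ j) * (1 + X) ^ j * (1 - X) ^ (k - j)

variable (s : K) {k : ℕ} (p : K[X])

theorem natDegree_cayleyTransform_le : (cayleyTransform s k p).natDegree ≤ k := by
  refine natDegree_sum_le_of_forall_le _ _ fun j hj ↦ ?_
  have hjk : j ≤ k := Nat.lt_succ_iff.1 (mem_range.1 hj)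
  have hplus : (1 + X : K[X]).natDegree ≤ 1 := by compute_degree
  have hminus : (1 - X : K[X]).natDegree ≤ 1 := by compute_degree
  refine natDegree_mul_le_of_le (natDegree_mul_le_of_le (natDegree_C _).le
    (natDegree_pow_le_of_le j hplus)) (natDegree_pow_le_of_le (k - j) hminus) |>.trans ?_
  omega

variable {s p}

theorem eval_cayleyTransform (hp : p.natDegree ≤ k) {w : K} (hw : w ≠ 1) :
    (cayleyTransform s k p).eval w = (1 - w) ^ k * p.eval (cayley s w) := by
  have hw' : 1 - w ≠ 0 := sub_ne_zero.2 (Ne.symm hw)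
  rw [cayleyTransform, eval_finsetSum, eval_eq_sum_range' (Nat.lt_succ_of_le hp), mul_sum]
  refine sum_congr rfl fun j hj ↦ ?_
  have hjk : j ≤ k := Nat.lt_succ_iff.1 (mem_range.1 hj)
  simp only [eval_mul, eval_pow, eval_add, eval_sub, eval_one, eval_X, eval_C, cayley]
  rw [div_pow, mul_pow, ← Nat.sub_add_cancel hjk, pow_add, Nat.add_sub_cancel]
  field_simp

theorem cayleyTransform_ne_zero [CharZero K] (hs : s ≠ 0) (hp : p ≠ 0) (hpk : p.natDegree ≤ k) :
    cayleyTransform s k p ≠ 0 := by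
  intro h0
  refine hp (p.eq_zero_of_infinite_isRoot ((Set.finite_singleton (-s)).infinite_compl.mono ?_))
  intro z hz
  have hzs : z + s ≠ 0 := fun h ↦ hz (eq_neg_of_add_eq_zero_left h)
  have hw := sub_div_add_ne_one hs hzs
  have := eval_cayleyTransform (s := s) hpk hw
  rw [h0, eval_zero, cayley_div hs hzs, eq_comm, mul_eq_zero] at this
  exact this.resolve_left (pow_ne_zero _ (sub_ne_zero.2 (Ne.symm hw)))

end Polynomial

end Cayley

theorem norm_cayley_sub_le {s : ℝ} (hs : 0 < s) {w : ℂ} (hw : ‖w‖ ≤ (1 - s) / (1 + s)) :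
    ‖cayley (s : ℂ) w - (((1 + s ^ 2) / 2 : ℝ) : ℂ)‖ ≤ (1 - s ^ 2) / 2 := by
  have hw' : (1 + s) * ‖w‖ ≤ 1 - s := by rwa [le_div_iff₀ (by positivity), mul_comm] at hw
  have hs1 : s ≤ 1 := by nlinarith [norm_nonneg w]
  have hw1 : 1 - w ≠ 0 := fun h ↦ by
    simp [← sub_eq_zero.1 h] at hw'
    linarith
  have hden : 2 * (1 - w) ≠ 0 := mul_ne_zero two_ne_zero hw1
  have key : cayley (s : ℂ) w - (((1 + s ^ 2) / 2 : ℝ) : ℂ) =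
      (((1 + s) ^ 2 : ℝ) * w - ((1 - s) ^ 2 : ℝ)) / (2 * (1 - w)) := by
    rw [eq_div_iff hden, cayley]
    push_cast
    field_simp
    ring
  have hw2 : (1 + s) ^ 2 * (w.re ^ 2 + w.im ^ 2) ≤ (1 - s) ^ 2 := by
    rw [← Complex.sq_norm_sub_sq_re w, add_sub_cancel, ← mul_pow]
    exact pow_le_pow_left₀ (by positivity) hw' 2
  rw [key, norm_div, div_le_iff₀ (norm_pos_iff.2 hden),
    ← sq_le_sq₀ (norm_nonneg _) (mul_nonneg (by nlinarith) (norm_nonneg _))]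
  simp only [mul_pow, Complex.sq_norm, Complex.normSq_apply, Complex.sub_re, Complex.sub_im,
    Complex.ofReal_re, Complex.ofReal_im, Complex.mul_re, Complex.mul_im, Complex.one_re,
    Complex.one_im, Complex.re_ofNat, Complex.im_ofNat]
  -- the right side minus the left side is `4 s ((1 - s)² - (1 + s)² |w|²)`
  linarith [mul_le_mul_of_nonneg_left hw2 hs.le]

theorem ENNReal.coe_le_toReal_mul_of_div_le {x y : ℝ≥0} {c : ℝ≥0∞} (hc : c ≠ ⊤)
    (h : (x : ℝ≥0∞) / y ≤ c) : (x : ℝ) ≤ c.toReal * y := by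
  have := (ENNReal.div_le_iff_le_mul (Or.inr hc) (Or.inl ENNReal.coe_ne_top)).1 h
  simpa using ENNReal.toReal_mono (ENNReal.mul_ne_top hc ENNReal.coe_ne_top) this

theorem ENNReal.toReal_mul_le_of_le_div {x y : ℝ≥0} {c : ℝ≥0∞} (h : c ≤ (x : ℝ≥0∞) / y) :
    c.toReal * y ≤ x := by
  rcases eq_or_ne y 0 with rfl | hy
  · simp
  have := (ENNReal.le_div_iff_mul_le (Or.inl (by simpa using hy)) (Or.inl ENNReal.coe_ne_top)).1 h
  simpa using ENNReal.toReal_mono ENNReal.coe_ne_top this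

namespace Polynomial

variable {s : ℂ} {P Q : ℂ[X]} {k : ℕ} {r R : ℝ}

theorem pow_div_le_div_of_norm_eval_cayley_le (hs : s ≠ 0) (hP : P ≠ 0) (hQ : Q ≠ 0)
    (hPk : P.natDegree ≤ k) (hQk : Q.natDegree ≤ k) (hr : 0 < r) (hr1 : r < 1) (hR1 : 1 < R)
    {a b : ℝ} (ha : 0 < a) (hb : 0 < b)
    (hin : ∀ w ∈ sphere (0 : ℂ) r, ‖P.eval (cayley s w)‖ ≤ a * ‖Q.eval (cayley s w)‖)
    (hout : ∀ w ∈ sphere (0 : ℂ) R, b * ‖Q.eval (cayley s w)‖ ≤ ‖P.eval (cayley s w)‖) :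
    (r / R) ^ k ≤ a / b := by
  refine pow_div_le_div_of_norm_eval_le (cayleyTransform_ne_zero hs hP hPk)
    (cayleyTransform_ne_zero hs hQ hQk) (natDegree_cayleyTransform_le _ _) hr (hr1.trans hR1).le
    ha hb (fun w hw ↦ ?_) (fun w hw ↦ ?_)
  · have hw1 := ne_one_of_mem_sphere_zero hr1.ne hw
    rw [eval_cayleyTransform hPk hw1, eval_cayleyTransform hQk hw1, norm_mul, norm_mul,
      mul_left_comm]
    exact mul_le_mul_of_nonneg_left (hin w hw) (norm_nonneg _)
  · have hw1 := ne_one_of_mem_sphere_zero hR1.ne' hw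
    rw [eval_cayleyTransform hPk hw1, eval_cayleyTransform hQk hw1, norm_mul, norm_mul,
      mul_left_comm]
    exact mul_le_mul_of_nonneg_left (hout w hw) (norm_nonneg _)

theorem ofReal_pow_div_le_iSup_div_iInf (hs : s ≠ 0) (hP : P ≠ 0) (hQ : Q ≠ 0)
    (hPk : P.natDegree ≤ k) (hQk : Q.natDegree ≤ k) (hr : 0 < r) (hr1 : r < 1) (hR1 : 1 < R)
    {E G : Set ℂ} (hE : ∀ w ∈ sphere (0 : ℂ) r, cayley s w ∈ E)
    (hG : ∀ w ∈ sphere (0 : ℂ) R, cayley s w ∈ G) :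
    ENNReal.ofReal ((r / R) ^ k) ≤
      (⨆ z ∈ E, (‖P.eval z‖₊ : ℝ≥0∞) / ‖Q.eval z‖₊) /
        ⨅ z ∈ G, (‖P.eval z‖₊ : ℝ≥0∞) / ‖Q.eval z‖₊ := by
  set A := ⨆ z ∈ E, (‖P.eval z‖₊ : ℝ≥0∞) / ‖Q.eval z‖₊
  set B := ⨅ z ∈ G, (‖P.eval z‖₊ : ℝ≥0∞) / ‖Q.eval z‖₊
  have hA : ∀ z ∈ E, (‖P.eval z‖₊ : ℝ≥0∞) / ‖Q.eval z‖₊ ≤ A := fun z hz ↦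
    le_iSup₂ (f := fun z (_ : z ∈ E) ↦ (‖P.eval z‖₊ : ℝ≥0∞) / ‖Q.eval z‖₊) z hz
  have hB : ∀ z ∈ G, B ≤ (‖P.eval z‖₊ : ℝ≥0∞) / ‖Q.eval z‖₊ := fun z hz ↦ iInf₂_le z hz
  have hA0 : A ≠ 0 := by
    obtain ⟨w, hw, hTw⟩ := exists_mem_sphere_eval_ne_zero (cayleyTransform_ne_zero hs hP hPk) hr
    rw [eval_cayleyTransform hPk (ne_one_of_mem_sphere_zero hr1.ne hw)] at hTw
    refine (ENNReal.div_pos ?_ ENNReal.coe_ne_top).trans_le (hA _ (hE w hw)) |>.ne'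
    simpa using right_ne_zero_of_mul hTw
  have hBtop : B ≠ ⊤ := by
    obtain ⟨w, hw, hTw⟩ := exists_mem_sphere_eval_ne_zero (cayleyTransform_ne_zero hs hQ hQk)
      (zero_lt_one.trans hR1)
    rw [eval_cayleyTransform hQk (ne_one_of_mem_sphere_zero hR1.ne' hw)] at hTw
    refine ((hB _ (hG w hw)).trans_lt (ENNReal.div_lt_top ENNReal.coe_ne_top ?_)).ne
    simpa using right_ne_zero_of_mul hTw
  -- `A ≠ 0` and `B ≠ ⊤` rule out the junk quotients `0 / 0 = ⊤ / ⊤ = 0`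
  rcases eq_or_ne B 0 with hB0 | hB0
  · simp [hB0, ENNReal.div_zero hA0]
  rcases eq_or_ne A ⊤ with hAtop | hAtop
  · simp [hAtop, ENNReal.top_div_of_ne_top hBtop]
  rw [← ENNReal.ofReal_toReal (ENNReal.div_ne_top hAtop hB0), ENNReal.toReal_div]
  refine ENNReal.ofReal_le_ofReal <| pow_div_le_div_of_norm_eval_cayley_le hs hP hQ hPk hQk hr
    hr1 hR1 (ENNReal.toReal_pos hA0 hAtop) (ENNReal.toReal_pos hB0 hBtop)
    (fun w hw ↦ ENNReal.coe_le_toReal_mul_of_div_le hAtop (hA _ (hE w hw)))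
    (fun w hw ↦ ENNReal.toReal_mul_le_of_le_div (hB _ (hG w hw)))

end Polynomial

theorem zolotarev_third_problem_lower_bound_general (ℓ : ℝ) (hℓ0 : 0 < ℓ) (hℓ1 : ℓ < 1)
    (k : ℕ)
    (S : Set ℂ)
    (hS : S = {z : ℂ | ‖z - (((1 + ℓ) / 2 : ℝ) : ℂ)‖ ≤ (1 - ℓ) / 2})
    (P Q : Polynomial ℂ) (hP : P ≠ 0) (hQ : Q ≠ 0)
    (hPdeg : P.degree ≤ (k : ℕ)) (hQdeg : Q.degree ≤ (k : ℕ)) :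
    ENNReal.ofReal (((1 + Real.sqrt ℓ) / (1 - Real.sqrt ℓ)) ^ (-(2 * (k : ℤ)))) ≤
      (⨆ z ∈ S, (‖P.eval z‖₊ : ENNReal) / (‖Q.eval z‖₊ : ENNReal)) /
        (⨅ z ∈ (fun w : ℂ => -w) ⁻¹' S, (‖P.eval z‖₊ : ENNReal) / (‖Q.eval z‖₊ : ENNReal)) := by
  set s := √ℓ
  have hs0 : 0 < s := Real.sqrt_pos.2 hℓ0
  have hs1 : s < 1 := (Real.sqrt_lt' one_pos).2 (by simpa using hℓ1)
  set ρ := (1 - s) / (1 + s)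
  have hρ0 : 0 < ρ := div_pos (by linarith) (by linarith)
  have hρ1 : ρ < 1 := (div_lt_one (by linarith)).2 (by linarith)
  have hSρ : ∀ w ∈ sphere (0 : ℂ) ρ, cayley (s : ℂ) w ∈ S := fun w hw ↦ by
    rw [hS, Set.mem_ofPred_eq, ← Real.sq_sqrt hℓ0.le]
    exact norm_cayley_sub_le hs0 (mem_sphere_zero_iff_norm.1 hw).le
  have hconst : ((1 + s) / (1 - s)) ^ (-(2 * (k : ℤ))) = (ρ / ρ⁻¹) ^ k := by
    rw [div_inv_eq_mul, ← sq, ← pow_mul, zpow_neg, ← inv_zpow, inv_div]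
    norm_cast
  rw [hconst]
  refine ofReal_pow_div_le_iSup_div_iInf (by exact_mod_cast hs0.ne') hP hQ
    (natDegree_le_iff_degree_le.2 hPdeg) (natDegree_le_iff_degree_le.2 hQdeg) hρ0 hρ1
    ((one_lt_inv₀ hρ0).2 hρ1) hSρ fun w hw ↦ ?_
  rw [Set.mem_preimage, ← cayley_inv _ (ne_of_mem_sphere hw (inv_ne_zero hρ0.ne'))]
  refine hSρ _ ?_
  rw [mem_sphere_zero_iff_norm, norm_inv, mem_sphere_zero_iff_norm.1 hw, inv_inv]

/-- For `0 < ℓ < 1`, `S` the closed disk `{z : |z − (1+ℓ)/2| ≤ (1−ℓ)/2}`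
and `−S` its reflection through the origin, every rational function `r = P/Q` with
`deg P ≤ k`, `deg Q ≤ k`, `P ≠ 0 ≠ Q` has separation ratio (in `[0,∞]`)
`sup_{z∈S}|r(z)| / inf_{z∈−S}|r(z)| ≥ ((1+√ℓ)/(1−√ℓ))^{−2k}`. -/
theorem zolotarev_third_problem_lower_bound (ℓ : ℝ) (hℓ0 : 0 < ℓ) (hℓ1 : ℓ < 1)
    (k : ℕ) (hk : 0 < k)
    (S : Set ℂ)
    (hS : S = {z : ℂ | ‖z - (((1 + ℓ) / 2 : ℝ) : ℂ)‖ ≤ (1 - ℓ) / 2})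
    (P Q : Polynomial ℂ) (hP : P ≠ 0) (hQ : Q ≠ 0)
    (hPdeg : P.degree ≤ (k : ℕ)) (hQdeg : Q.degree ≤ (k : ℕ)) :
    ENNReal.ofReal (((1 + Real.sqrt ℓ) / (1 - Real.sqrt ℓ)) ^ (-(2 * (k : ℤ)))) ≤
      (⨆ z ∈ S, (‖P.eval z‖₊ : ENNReal) / (‖Q.eval z‖₊ : ENNReal)) /
        (⨅ z ∈ (fun w : ℂ => -w) ⁻¹' S, (‖P.eval z‖₊ : ENNReal) / (‖Q.eval z‖₊ : ENNReal)) :=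
  zolotarev_third_problem_lower_bound_general ℓ hℓ0 hℓ1 k S hS P Q hP hQ hPdeg hQdeg
end

section
/- Let 0 < a < b, set γ = (√b − √a)/(√b + √a) and ℓ = γ², and define the Möbius transform T(z) = γ·(z − √(ab))/(z + √(ab)). Then for every z ∈ ℂ with z ≠ −√(ab): |z| ≤ a if and only if |T(z) + (1+ℓ)/2| ≤ (1−ℓ)/2, and |z| ≥ b if and only if |T(z) − (1+ℓ)/2| ≤ (1−ℓ)/2. In particular T maps the closed disk I = {|z| ≤ a} into −S and the closed exterior region O = {|z| ≥ b} into S, where S = {w ∈ ℂ : |w − (1+ℓ)/2| ≤ (1−ℓ)/2}. -/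
/-!
Write `c = √(ab)`, `p = (1 + γ)²`, `q = (1 - γ)²`. Then
`T z + (1 + ℓ)/2 = (p z + q c) / (2 (z + c))`, `T z - (1 + ℓ)/2 = -(q z + p c) / (2 (z + c))`
and `(1 - ℓ)/2 = √(pq)/2`, so both disk conditions have the form
`‖p z + q c‖² ≤ pq ‖z + c‖²` (the second with `p, q` swapped). The identity
`‖p z + q c‖² = pq ‖z + c‖² - (p - q) (q c² - p ‖z‖²)` turns them into the circle conditions
`(1 + γ) ‖z‖ ≤ (1 - γ) c` and `(1 + γ) c ≤ (1 - γ) ‖z‖`, and for `γ = (√b - √a)/(√b + √a)` the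
radii `(1 - γ) c / (1 + γ)` and `(1 + γ) c / (1 - γ)` are exactly `a` and `b`.
-/

open Complex

lemma normSq_mul_add_mul_ofReal (p q c : ℝ) (z : ℂ) :
    normSq (p * z + q * c) = p * q * normSq (z + c) - (p - q) * (q * c ^ 2 - p * normSq z) := by
  simp only [normSq_apply, add_re, add_im, mul_re, mul_im, ofReal_re, ofReal_im]
  ring

lemma norm_le_mul_norm_iff_normSq {r : ℝ} (hr : 0 ≤ r) (w w' : ℂ) :
    ‖w‖ ≤ r * ‖w'‖ ↔ normSq w ≤ r ^ 2 * normSq w' := by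
  rw [← sq_le_sq₀ (norm_nonneg w) (by positivity), mul_pow, Complex.sq_norm, Complex.sq_norm]

lemma norm_sq_mul_add_sq_mul_le_iff_norm_le {u v c : ℝ} (hv : 0 ≤ v) (hvu : v < u) (hc : 0 ≤ c)
    (z : ℂ) :
    ‖((u ^ 2 : ℝ) : ℂ) * z + ((v ^ 2 : ℝ) : ℂ) * c‖ ≤ u * v * ‖z + c‖ ↔ u * ‖z‖ ≤ v * c := by
  have hu : 0 < u := hv.trans_lt hvu
  rw [norm_le_mul_norm_iff_normSq (by positivity), normSq_mul_add_mul_ofReal, ← mul_pow,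
    sub_le_self_iff, mul_nonneg_iff_of_pos_left (by nlinarith), sub_nonneg,
    ← Complex.sq_norm, ← mul_pow, ← mul_pow, sq_le_sq₀ (by positivity) (by positivity)]

lemma norm_sq_mul_add_sq_mul_le_iff_le_norm {u v c : ℝ} (hv : 0 ≤ v) (hvu : v < u) (hc : 0 ≤ c)
    (z : ℂ) :
    ‖((v ^ 2 : ℝ) : ℂ) * z + ((u ^ 2 : ℝ) : ℂ) * c‖ ≤ u * v * ‖z + c‖ ↔ u * c ≤ v * ‖z‖ := by
  have hu : 0 < u := hv.trans_lt hvu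
  rw [norm_le_mul_norm_iff_normSq (by positivity), normSq_mul_add_mul_ofReal, mul_comm u v,
    ← mul_pow, sub_le_self_iff, show (v ^ 2 - u ^ 2) * (u ^ 2 * c ^ 2 - v ^ 2 * normSq z)
      = (u ^ 2 - v ^ 2) * (v ^ 2 * normSq z - u ^ 2 * c ^ 2) by ring,
    mul_nonneg_iff_of_pos_left (by nlinarith), sub_nonneg,
    ← Complex.sq_norm, ← mul_pow, ← mul_pow, sq_le_sq₀ (by positivity) (by positivity)]

lemma mobius_add_eq {γ c : ℝ} {z : ℂ} (hz : z + c ≠ 0) :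
    γ * (z - c) / (z + c) + (((1 + γ ^ 2) / 2 : ℝ) : ℂ)
      = (((1 + γ) ^ 2 : ℝ) * z + ((1 - γ) ^ 2 : ℝ) * c) / (2 * (z + c)) := by
  field_simp
  push_cast
  ring

lemma mobius_sub_eq {γ c : ℝ} {z : ℂ} (hz : z + c ≠ 0) :
    γ * (z - c) / (z + c) - (((1 + γ ^ 2) / 2 : ℝ) : ℂ)
      = -((((1 - γ) ^ 2 : ℝ) * z + ((1 + γ) ^ 2 : ℝ) * c) / (2 * (z + c))) := by
  field_simp
  push_cast
  ring

theorem norm_mobius_add_le_iff {γ c : ℝ} (hγ0 : 0 < γ) (hγ1 : γ ≤ 1) (hc : 0 ≤ c) {z : ℂ}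
    (hz : z + c ≠ 0) :
    ‖γ * (z - c) / (z + c) + (((1 + γ ^ 2) / 2 : ℝ) : ℂ)‖ ≤ (1 - γ ^ 2) / 2
      ↔ (1 + γ) * ‖z‖ ≤ (1 - γ) * c := by
  rw [mobius_add_eq hz, norm_div, div_le_iff₀ (by simpa using hz), norm_mul, Complex.norm_two,
    show (1 - γ ^ 2) / 2 * (2 * ‖z + c‖) = (1 + γ) * (1 - γ) * ‖z + c‖ by ring]
  exact norm_sq_mul_add_sq_mul_le_iff_norm_le (by linarith) (by linarith) hc z

theorem norm_mobius_sub_le_iff {γ c : ℝ} (hγ0 : 0 < γ) (hγ1 : γ ≤ 1) (hc : 0 ≤ c) {z : ℂ}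
    (hz : z + c ≠ 0) :
    ‖γ * (z - c) / (z + c) - (((1 + γ ^ 2) / 2 : ℝ) : ℂ)‖ ≤ (1 - γ ^ 2) / 2
      ↔ (1 + γ) * c ≤ (1 - γ) * ‖z‖ := by
  rw [mobius_sub_eq hz, norm_neg, norm_div, div_le_iff₀ (by simpa using hz), norm_mul,
    Complex.norm_two, show (1 - γ ^ 2) / 2 * (2 * ‖z + c‖) = (1 + γ) * (1 - γ) * ‖z + c‖ by ring]
  exact norm_sq_mul_add_sq_mul_le_iff_le_norm (by linarith) (by linarith) hc z

lemma one_add_mul_sq_eq_one_sub_mul {s r : ℝ} (h : r + s ≠ 0) :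
    (1 + (r - s) / (r + s)) * s ^ 2 = (1 - (r - s) / (r + s)) * (s * r) ∧
      (1 + (r - s) / (r + s)) * (s * r) = (1 - (r - s) / (r + s)) * r ^ 2 := by
  constructor <;> field_simp <;> ring

lemma add_ofReal_ne_zero_of_norm_ne {c : ℝ} (hc : 0 ≤ c) {z : ℂ} (h : ‖z‖ ≠ c) : z + c ≠ 0 :=
  fun hzc ↦ h <| by rw [eq_neg_of_add_eq_zero_left hzc, norm_neg, norm_real, Real.norm_of_nonneg hc]

/-- For `0 < a < b`, `γ = (√b − √a)/(√b + √a)`, `ℓ = γ²`, the Möbius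
transform `T(z) = γ(z − √(ab))/(z + √(ab))` satisfies, for every `z ≠ −√(ab)`:
`|z| ≤ a ↔ |T z + (1+ℓ)/2| ≤ (1−ℓ)/2` and `|z| ≥ b ↔ |T z − (1+ℓ)/2| ≤ (1−ℓ)/2`.
In particular `T` maps `I = {|z| ≤ a}` into `−S` and `O = {|z| ≥ b}` into `S`. -/
theorem mobius_maps_annulus_to_zolotarev_disks (a b : ℝ) (ha : 0 < a) (hab : a < b)
    (γ ℓ : ℝ)
    (hγ : γ = (Real.sqrt b - Real.sqrt a) / (Real.sqrt b + Real.sqrt a))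
    (hℓ : ℓ = γ ^ 2)
    (T : ℂ → ℂ)
    (hT : T = fun z =>
      (γ : ℂ) * (z - ((Real.sqrt (a * b) : ℝ) : ℂ)) / (z + ((Real.sqrt (a * b) : ℝ) : ℂ))) :
    (∀ z : ℂ, z ≠ -((Real.sqrt (a * b) : ℝ) : ℂ) →
      ((‖z‖ ≤ a ↔
          ‖T z + (((1 + ℓ) / 2 : ℝ) : ℂ)‖ ≤ (1 - ℓ) / 2) ∧
       (b ≤ ‖z‖ ↔
          ‖T z - (((1 + ℓ) / 2 : ℝ) : ℂ)‖ ≤ (1 - ℓ) / 2))) ∧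
    Set.MapsTo T {z : ℂ | ‖z‖ ≤ a}
      {w : ℂ | ‖-w - (((1 + ℓ) / 2 : ℝ) : ℂ)‖ ≤ (1 - ℓ) / 2} ∧
    Set.MapsTo T {z : ℂ | b ≤ ‖z‖}
      {w : ℂ | ‖w - (((1 + ℓ) / 2 : ℝ) : ℂ)‖ ≤ (1 - ℓ) / 2} := by
  have hs : 0 < √a := Real.sqrt_pos.2 ha
  have hsr : √a < √b := Real.sqrt_lt_sqrt ha.le hab
  have hsa : √a ^ 2 = a := Real.sq_sqrt ha.le
  have hsb : √b ^ 2 = b := Real.sq_sqrt (ha.trans hab).le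
  have hc : √(a * b) = √a * √b := Real.sqrt_mul ha.le b
  have hγ0 : 0 < γ := hγ ▸ div_pos (sub_pos.2 hsr) (by positivity)
  have hγ1 : γ < 1 := hγ ▸ (div_lt_one (by positivity)).2 (by linarith)
  obtain ⟨hac, hcb⟩ : a < √(a * b) ∧ √(a * b) < b := by
    rw [hc]
    constructor <;> nlinarith
  obtain ⟨hinner, houter⟩ := one_add_mul_sq_eq_one_sub_mul (s := √a) (r := √b) (by positivity)
  rw [hsa, ← hγ, ← hc] at hinner
  rw [hsb, ← hγ, ← hc] at houter
  have key : ∀ z : ℂ, z + √(a * b) ≠ 0 →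
      (‖z‖ ≤ a ↔ ‖T z + (((1 + ℓ) / 2 : ℝ) : ℂ)‖ ≤ (1 - ℓ) / 2) ∧
        (b ≤ ‖z‖ ↔ ‖T z - (((1 + ℓ) / 2 : ℝ) : ℂ)‖ ≤ (1 - ℓ) / 2) := by
    intro z hz
    subst hT hℓ
    rw [norm_mobius_add_le_iff hγ0 hγ1.le (by positivity) hz,
      norm_mobius_sub_le_iff hγ0 hγ1.le (by positivity) hz, ← hinner, houter,
      mul_le_mul_iff_of_pos_left (by linarith), mul_le_mul_iff_of_pos_left (by linarith)]
    exact ⟨Iff.rfl, Iff.rfl⟩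
  refine ⟨fun z hz ↦ key z fun h ↦ hz (eq_neg_of_add_eq_zero_left h), fun z hz ↦ ?_, fun z hz ↦ ?_⟩
  · have := (key z (add_ofReal_ne_zero_of_norm_ne (by positivity) (hz.trans_lt hac).ne)).1.1 hz
    rwa [Set.mem_ofPred_eq, ← neg_add', norm_neg]
  · exact (key z (add_ofReal_ne_zero_of_norm_ne (by positivity) (hcb.trans_le hz).ne')).2.1 hz
end

section
/- Let 0 < a < b and let k be a positive integer. The trapezoidal-quadrature rational function R(z) = 1/(1 + (z/a)^k) achieves the separation ratio sup_{z ∈ O} |R(z)| / inf_{z ∈ I} |R(z)| = 2/((b/a)^k − 1), where I = {z ∈ ℂ : |z| ≤ a} and O = {z ∈ ℂ : |z| ≥ b}. -/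
/-!
On `‖z‖ ≤ a` the denominator `‖1 + (z / a) ^ k‖` is at most `2`, with equality at `z = a`. On
`‖z‖ ≥ b` the reverse triangle inequality bounds it below by `(b / a) ^ k - 1`, with equality where
`(z / a) ^ k = -(b / a) ^ k`. Hence `sup_O |R| = 1 / ((b / a) ^ k - 1)` and `inf_I |R| = 1 / 2`.
-/

open Set
open scoped ENNReal

lemma norm_one_add_pow_le_two {R : Type*} [NormedRing R] [NormOneClass R] {w : R} (hw : ‖w‖ ≤ 1)
    (k : ℕ) : ‖1 + w ^ k‖ ≤ 2 :=
  calc ‖1 + w ^ k‖ ≤ ‖(1 : R)‖ + ‖w ^ k‖ := norm_add_le _ _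
    _ ≤ 1 + 1 := by
      rw [norm_one]
      gcongr
      exact (norm_pow_le w k).trans (pow_le_one₀ (norm_nonneg w) hw)
    _ = 2 := one_add_one_eq_two

lemma pow_sub_one_le_norm_one_add_pow {R : Type*} [NormedRing R] [NormOneClass R] [NormMulClass R]
    {r : ℝ} {w : R} (hr : 0 ≤ r) (hw : r ≤ ‖w‖) (k : ℕ) : r ^ k - 1 ≤ ‖1 + w ^ k‖ :=
  calc r ^ k - 1 ≤ ‖w ^ k‖ - ‖(1 : R)‖ := by
        rw [norm_pow, norm_one]; gcongr
    _ ≤ ‖w ^ k + 1‖ := norm_sub_le_norm_add _ _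
    _ = ‖1 + w ^ k‖ := by rw [add_comm]

lemma Complex.exists_norm_eq_pow_eq_neg_pow {r : ℝ} (hr : 0 ≤ r) {k : ℕ} (hk : k ≠ 0) :
    ∃ w : ℂ, ‖w‖ = r ∧ w ^ k = -(r : ℂ) ^ k := by
  obtain ⟨w, hw⟩ := IsAlgClosed.exists_pow_nat_eq (-(r : ℂ) ^ k) (Nat.pos_of_ne_zero hk)
  refine ⟨w, (pow_left_inj₀ (norm_nonneg w) hr hk).1 ?_, hw⟩
  rw [← norm_pow, hw, norm_neg, norm_pow, Complex.norm_real, Real.norm_of_nonneg hr]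

lemma norm_div_ofReal_of_pos {a : ℝ} (ha : 0 < a) (z : ℂ) : ‖z / (a : ℂ)‖ = ‖z‖ / a := by
  rw [norm_div, Complex.norm_real, Real.norm_of_nonneg ha.le]

lemma isGreatest_norm_one_add_div_pow {a : ℝ} (ha : 0 < a) (k : ℕ) :
    IsGreatest ((fun z : ℂ => ‖1 + (z / a) ^ k‖) '' {z | ‖z‖ ≤ a}) 2 := by
  refine ⟨⟨a, by simp [abs_of_pos ha], ?_⟩, ?_⟩
  · show ‖1 + ((a : ℂ) / a) ^ k‖ = 2
    rw [div_self (Complex.ofReal_ne_zero.2 ha.ne'), one_pow]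
    norm_num
  · rintro _ ⟨z, hz, rfl⟩
    refine norm_one_add_pow_le_two ?_ k
    rw [norm_div_ofReal_of_pos ha]
    exact (div_le_one ha).2 hz

lemma isLeast_norm_one_add_div_pow {a b : ℝ} (ha : 0 < a) (hab : a ≤ b) {k : ℕ} (hk : k ≠ 0) :
    IsLeast ((fun z : ℂ => ‖1 + (z / a) ^ k‖) '' {z | b ≤ ‖z‖}) ((b / a) ^ k - 1) := by
  have hba : 1 ≤ b / a := (one_le_div ha).2 hab
  obtain ⟨w, hw, hwk⟩ := Complex.exists_norm_eq_pow_eq_neg_pow (zero_le_one.trans hba) hk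
  refine ⟨⟨a * w, ?_, ?_⟩, ?_⟩
  · show b ≤ ‖(a : ℂ) * w‖
    rw [norm_mul, hw, Complex.norm_real, Real.norm_of_nonneg ha.le, mul_div_cancel₀ b ha.ne']
  · show ‖1 + ((a : ℂ) * w / a) ^ k‖ = _
    rw [mul_div_cancel_left₀ w (Complex.ofReal_ne_zero.2 ha.ne'), hwk, ← sub_eq_add_neg,
      ← Complex.ofReal_pow, ← Complex.ofReal_one, ← Complex.ofReal_sub, Complex.norm_real,
      Real.norm_eq_abs, abs_sub_comm, abs_of_nonneg (sub_nonneg.2 (one_le_pow₀ hba))]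
  · rintro _ ⟨z, hz, rfl⟩
    refine pow_sub_one_le_norm_one_add_pow (by positivity) ?_ k
    rw [norm_div_ofReal_of_pos ha]
    exact div_le_div_of_nonneg_right hz ha.le

lemma ENNReal.antitone_inv_ofReal : Antitone fun t : ℝ => (ENNReal.ofReal t)⁻¹ :=
  fun _ _ hst => ENNReal.inv_le_inv.2 (ENNReal.ofReal_le_ofReal hst)

lemma biSup_one_div_nnnorm_eq_of_isLeast {α E : Type*} [SeminormedAddGroup E] {f : α → E}
    {s : Set α} {m : ℝ} (h : IsLeast ((‖f ·‖) '' s) m) :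
    ⨆ x ∈ s, (1 : ℝ≥0∞) / ‖f x‖₊ = (ENNReal.ofReal m)⁻¹ := by
  have := (ENNReal.antitone_inv_ofReal.map_isLeast h).isLUB.sSup_eq
  rw [image_image, sSup_image] at this
  simpa only [one_div, ofReal_norm, enorm_eq_nnnorm] using this

lemma biInf_one_div_nnnorm_eq_of_isGreatest {α E : Type*} [SeminormedAddGroup E] {f : α → E}
    {s : Set α} {M : ℝ} (h : IsGreatest ((‖f ·‖) '' s) M) :
    ⨅ x ∈ s, (1 : ℝ≥0∞) / ‖f x‖₊ = (ENNReal.ofReal M)⁻¹ := by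
  have := (ENNReal.antitone_inv_ofReal.map_isGreatest h).isGLB.sInf_eq
  rw [image_image, sInf_image] at this
  simpa only [one_div, ofReal_norm, enorm_eq_nnnorm] using this

/-- For `0 < a < b` and positive integer `k`, the trapezoidal-quadrature
rational function `R(z) = 1/(1 + (z/a)^k)` achieves separation ratio
`sup_{z∈O}|R| / inf_{z∈I}|R| = 2/((b/a)^k − 1)` between `O = {|z| ≥ b}` and
`I = {|z| ≤ a}` (absolute values interpreted in `[0,∞]`). -/
theorem trapezoidal_separation_ratio (a b : ℝ) (ha : 0 < a) (hab : a < b)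
    (k : ℕ) (hk : 0 < k) :
    (⨆ z ∈ {z : ℂ | b ≤ ‖z‖},
        (1 : ENNReal) / (‖1 + (z / ((a : ℝ) : ℂ)) ^ k‖₊ : ENNReal)) /
      (⨅ z ∈ {z : ℂ | ‖z‖ ≤ a},
        (1 : ENNReal) / (‖1 + (z / ((a : ℝ) : ℂ)) ^ k‖₊ : ENNReal))
      = ENNReal.ofReal (2 / ((b / a) ^ k - 1)) := by
  have hpos : 0 < (b / a) ^ k - 1 := sub_pos.2 (one_lt_pow₀ ((one_lt_div ha).2 hab) hk.ne')
  rw [biSup_one_div_nnnorm_eq_of_isLeast (isLeast_norm_one_add_div_pow ha hab.le hk.ne'),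
    biInf_one_div_nnnorm_eq_of_isGreatest (isGreatest_norm_one_add_div_pow ha k),
    ENNReal.div_eq_inv_mul, inv_inv, ← div_eq_mul_inv, ENNReal.ofReal_div_of_pos hpos]
end

section
/- Let k₁, k₂ be positive integers, c ∈ ℂ, r > 0, and set k = k₁·k₂. Let T(w) = (1 − w)/w. Then for every z ∈ ℂ with ((z − c)/r)^{k₁} ≠ −1 and ((z − c)/r)^{k} ≠ −1, the composite rule R_{c,r,k}(z) = R_{0,1,k₂}(T(R_{c,r,k₁}(z))) holds; explicitly, 1/(1 + ((z−c)/r)^{k₁k₂}) = 1/(1 + (T(1/(1 + ((z−c)/r)^{k₁})))^{k₂}). -/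
def mobiusT {K : Type*} [Field K] (w : K) : K := (1 - w) / w

theorem mobiusT_one_div_one_add {K : Type*} [Field K] {w : K} (hw : w ≠ -1) :
    mobiusT (1 / (1 + w)) = w := by
  have hw' : 1 + w ≠ 0 := fun h => hw (eq_neg_of_add_eq_zero_right h)
  unfold mobiusT
  field_simp
  ring

theorem composite_rule_general (k₁ k₂ : ℕ)
    (c : ℂ) (r : ℝ) (z : ℂ)
    (h1 : ((z - c) / (r : ℂ)) ^ k₁ ≠ -1) :
    1 / (1 + ((z - c) / (r : ℂ)) ^ (k₁ * k₂)) =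
      1 / (1 + ((1 - 1 / (1 + ((z - c) / (r : ℂ)) ^ k₁)) /
        (1 / (1 + ((z - c) / (r : ℂ)) ^ k₁))) ^ k₂) := by
  have hT := mobiusT_one_div_one_add h1
  unfold mobiusT at hT
  rw [hT, pow_mul]

/-- Composite rule: for positive integers `k₁, k₂`, `k = k₁k₂`,
center `c`, radius `r > 0`, and `T(w) = (1 − w)/w`, for every `z` with
`((z−c)/r)^{k₁} ≠ −1` and `((z−c)/r)^{k} ≠ −1`,
`R_{c,r,k}(z) = R_{0,1,k₂}(T(R_{c,r,k₁}(z)))`, i.e.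
`1/(1 + ((z−c)/r)^{k₁k₂}) = 1/(1 + (T(1/(1 + ((z−c)/r)^{k₁})))^{k₂})`. -/
theorem composite_rule (k₁ k₂ : ℕ) (hk₁ : 0 < k₁) (hk₂ : 0 < k₂)
    (c : ℂ) (r : ℝ) (hr : 0 < r) (z : ℂ)
    (h1 : ((z - c) / (r : ℂ)) ^ k₁ ≠ -1)
    (h2 : ((z - c) / (r : ℂ)) ^ (k₁ * k₂) ≠ -1) :
    1 / (1 + ((z - c) / (r : ℂ)) ^ (k₁ * k₂)) =
      1 / (1 + ((1 - 1 / (1 + ((z - c) / (r : ℂ)) ^ k₁)) /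
        (1 / (1 + ((z - c) / (r : ℂ)) ^ k₁))) ^ k₂) :=
  composite_rule_general k₁ k₂ c r z h1
end

section
/- Let k₁ be a positive integer, k₂ an even positive integer, c ∈ ℂ, r > 0, and k = k₁·k₂. Let p = c + r·σ be any pole of R_{c,r,k}, i.e. σ ∈ ℂ with σ^k = −1. Then σ^{k₁} is a root of x^{k₂} = −1, σ^{k₁} ≠ −1, and R_{c,r,k₁}(p) = 1/(1 + σ^{k₁}); that is, the inner rational function maps every pole of R_{c,r,k} to one of the shifts s_j^{(k₂)} = 1/(1 + σ_j^{(k₂)}) of the outer rational function. -/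
theorem Even.ne_neg_one_of_pow_eq_neg_one {M : Type*} [Monoid M] [HasDistribNeg M] {n : ℕ}
    (hn : Even n) (hM : (-1 : M) ≠ 1) {x : M} (hx : x ^ n = -1) : x ≠ -1 := by
  rintro rfl
  exact hM (hx.symm.trans hn.neg_one_pow)

theorem inner_filter_maps_poles_to_shifts_general (k₁ k₂ : ℕ)
    (hk₂even : Even k₂) (c : ℂ) (r : ℝ) (hr : 0 < r)
    (σ : ℂ) (hσ : σ ^ (k₁ * k₂) = -1) :
    (σ ^ k₁) ^ k₂ = -1 ∧ σ ^ k₁ ≠ -1 ∧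
    1 / (1 + (((c + (r : ℂ) * σ) - c) / (r : ℂ)) ^ k₁) = 1 / (1 + σ ^ k₁) := by
  have hroot : (σ ^ k₁) ^ k₂ = -1 := by rwa [← pow_mul]
  have hr' : (r : ℂ) ≠ 0 := Complex.ofReal_ne_zero.mpr hr.ne'
  refine ⟨hroot, hk₂even.ne_neg_one_of_pow_eq_neg_one (by norm_num) hroot, ?_⟩
  rw [add_sub_cancel_left, mul_div_cancel_left₀ σ hr']

/-- For positive integers `k₁` and even `k₂`, `k = k₁k₂`, `c ∈ ℂ`,
`r > 0`, and any pole `p = c + rσ` of `R_{c,r,k}` (i.e. `σ^k = −1`): `σ^{k₁}` is a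
root of `x^{k₂} = −1`, `σ^{k₁} ≠ −1`, and the inner rational function satisfies
`R_{c,r,k₁}(p) = 1/(1 + σ^{k₁})`, one of the outer shifts `s_j = 1/(1 + σ_j)`. -/
theorem inner_filter_maps_poles_to_shifts (k₁ k₂ : ℕ) (hk₁ : 0 < k₁) (hk₂ : 0 < k₂)
    (hk₂even : Even k₂) (c : ℂ) (r : ℝ) (hr : 0 < r)
    (σ : ℂ) (hσ : σ ^ (k₁ * k₂) = -1) :
    (σ ^ k₁) ^ k₂ = -1 ∧ σ ^ k₁ ≠ -1 ∧
    1 / (1 + (((c + (r : ℂ) * σ) - c) / (r : ℂ)) ^ k₁) = 1 / (1 + σ ^ k₁) :=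
  inner_filter_maps_poles_to_shifts_general k₁ k₂ hk₂even c r hr σ hσ
end
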